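/- arXiv:2103.09731 — 2 statements merged into one kernel-verified Lean document; each statement's English description precedes it below -/
import Mathlib

section
/- Let G be a connected weighted graph, s,t vertices, and ε > 0. Let H₀ be a subgraph of G with d_{H₀}(s,t) > d_G(s,t) + (6+ε)·W(s,t), and let H₁ be H₀ together with all edges of π(s,t). Let u, y, v be vertices appearing in this order along π(s,t) with d_{H₀}(s,u) = d_G(s,u) and d_{H₀}(v,t) = d_G(v,t); let a be a vertex joined in H₀ to u by an edge of weight at most W(s,t), let b be a vertex joined in H₀ to v by an edge of weight at most W(s,t), and let x be a vertex joined in H₀ to y by an edge of weight at most W(s,t). Then: (1) d_{H₁}(a,x) ≤ d_G(a,x) + 4·W(s,t) and d_{H₁}(x,b) ≤ d_G(x,b) + 4·W(s,t); and (2) d_{H₀}(a,x) − d_{H₁}(a,x) > ε·W(s,t)/2 or d_{H₀}(x,b) − d_{H₁}(x,b) > ε·W(s,t)/2. -/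
open scoped ENNReal Classical

/-- The total weight of a walk: the sum of the weights of its edges. -/
noncomputable def walkWeight {V : Type} (G : SimpleGraph V) (w : Sym2 V → ℝ≥0∞)
    {s t : V} (p : G.Walk s t) : ℝ≥0∞ :=
  (p.edges.map w).sum

/-- Shortest-path distance in the weighted graph `(G, w)`, equal to `⊤` if there is no path. -/
noncomputable def gdist {V : Type} (G : SimpleGraph V) (w : Sym2 V → ℝ≥0∞)
    (s t : V) : ℝ≥0∞ :=
  ⨅ p : G.Walk s t, walkWeight G w p

/-- The maximum edge weight along a walk (0 for the trivial walk). -/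
noncomputable def maxEdge {V : Type} (G : SimpleGraph V) (w : Sym2 V → ℝ≥0∞)
    {s t : V} (p : G.Walk s t) : ℝ≥0∞ :=
  (p.edges.map w).foldr max 0

/-- `π` assigns to each ordered vertex pair a shortest path: a walk whose total
weight equals the shortest-path distance. -/
def IsShortestPathScheme {V : Type} (G : SimpleGraph V) (w : Sym2 V → ℝ≥0∞)
    (π : (s t : V) → G.Walk s t) : Prop :=
  ∀ s t : V, walkWeight G w (π s t) = gdist G w s t

/-- The edge weights are positive and finite on all edges of `G`. -/
def PosWeights {V : Type} (G : SimpleGraph V) (w : Sym2 V → ℝ≥0∞) : Prop :=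
  ∀ e ∈ G.edgeSet, 0 < w e ∧ w e ≠ ⊤

/-! The shortest path `π(s,t)` is `p₁ p₂ p₃ p₄`, cut at `u`, `y`, `v`. Adding it to `H₀` brings
`a` and `x` within `w(p₂) + 2W` of each other, and `w(p₂) ≤ d_G(a,x) + 2W` because `p₂` is a
shortest path between points `W`-close to `a` and `x`: this gives (1), and likewise for `(x,b)`.
For (2), the walk `s ⇝ u – a ⇝ x ⇝ b – v ⇝ t` in `H₀`, whose end pieces are exact, has length at
most `d_G(s,t) + 6W` plus the two improvements; if both were at most `εW/2`, the pair `(s,t)`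
would not violate the `(6+ε)W` bound in `H₀`. -/

open SimpleGraph

section Distance

variable {V : Type} {G H : SimpleGraph V} {w : Sym2 V → ℝ≥0∞} {s t u v : V}

lemma walkWeight_append (p : G.Walk s u) (q : G.Walk u t) :
    walkWeight G w (p.append q) = walkWeight G w p + walkWeight G w q := by
  simp [walkWeight]

lemma walkWeight_reverse (p : G.Walk s t) : walkWeight G w p.reverse = walkWeight G w p := by
  simp [walkWeight, List.sum_reverse]

lemma gdist_le_walkWeight (p : G.Walk s t) : gdist G w s t ≤ walkWeight G w p :=
  iInf_le _ p

lemma gdist_le_walkWeight_of_edges_mem (p : G.Walk s t) (hp : ∀ e ∈ p.edges, e ∈ H.edgeSet) :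
    gdist H w s t ≤ walkWeight G w p := by
  simpa [walkWeight, Walk.edges_transfer] using gdist_le_walkWeight (w := w) (p.transfer H hp)

lemma gdist_le_of_adj (h : G.Adj s t) : gdist G w s t ≤ w s(s, t) := by
  simpa [walkWeight] using gdist_le_walkWeight (w := w) (Walk.cons h Walk.nil)

lemma gdist_comm (G : SimpleGraph V) (w : Sym2 V → ℝ≥0∞) (s t : V) :
    gdist G w s t = gdist G w t s := by
  refine le_antisymm (le_iInf fun p => ?_) (le_iInf fun p => ?_) <;>
    exact walkWeight_reverse p ▸ gdist_le_walkWeight p.reverse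

lemma gdist_triangle (G : SimpleGraph V) (w : Sym2 V → ℝ≥0∞) (s u t : V) :
    gdist G w s t ≤ gdist G w s u + gdist G w u t := by
  simp only [gdist, ENNReal.iInf_add, ENNReal.add_iInf]
  exact le_iInf fun q => le_iInf fun p => walkWeight_append p q ▸ gdist_le_walkWeight (p.append q)

lemma walkWeight_le_gdist_of_append_append (p : G.Walk s u) (q : G.Walk u v) (r : G.Walk v t)
    (h : walkWeight G w (p.append (q.append r)) ≤ gdist G w s t) (hfin : gdist G w s t ≠ ⊤) :
    walkWeight G w q ≤ gdist G w u v := by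
  rw [walkWeight_append, walkWeight_append] at h
  have hp : walkWeight G w p ≠ ⊤ := ne_top_of_le_ne_top hfin (le_self_add.trans h)
  have hr : walkWeight G w r ≠ ⊤ :=
    ne_top_of_le_ne_top hfin ((le_add_self.trans le_add_self).trans h)
  have hdetour : gdist G w s t ≤ walkWeight G w p + (gdist G w u v + walkWeight G w r) :=
    calc gdist G w s t ≤ gdist G w s u + (gdist G w u v + gdist G w v t) :=
          (gdist_triangle G w s u t).trans (by gcongr; exact gdist_triangle G w u v t)
      _ ≤ _ := by gcongr <;> exact gdist_le_walkWeight _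
  exact (ENNReal.add_le_add_iff_right hr).1 ((ENNReal.add_le_add_iff_left hp).1 (h.trans hdetour))

lemma SimpleGraph.Walk.edges_mem_edgeSet_sup_fromEdgeSet (p : G.Walk s t) (H : SimpleGraph V) :
    ∀ e ∈ p.edges, e ∈ (H ⊔ fromEdgeSet {e | e ∈ p.edges}).edgeSet := fun e he => by
  rw [edgeSet_sup, edgeSet_fromEdgeSet]
  exact Or.inr ⟨he, G.not_isDiag_of_mem_edgeSet (p.edges_subset_edgeSet he)⟩

end Distance

lemma ofReal_six_add_mul {ε : ℝ} (hε : 0 ≤ ε) (W : ℝ≥0∞) :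
    ENNReal.ofReal (6 + ε) * W =
      6 * W + ENNReal.ofReal (ε / 2) * W + ENNReal.ofReal (ε / 2) * W := by
  rw [← add_mul, ← add_mul, add_assoc, ← ENNReal.ofReal_add (by positivity) (by positivity),
    add_halves, ENNReal.ofReal_add (by norm_num) hε, ENNReal.ofReal_ofNat]

section Spanner

variable {V : Type} {G H₀ H : SimpleGraph V} {w : Sym2 V → ℝ≥0∞} {W : ℝ≥0∞} {s t u y v a x b : V}

lemma gdist_le_walkWeight_add_two_mul (hH₀H : H₀ ≤ H) (q : G.Walk u y)
    (hqH : ∀ e ∈ q.edges, e ∈ H.edgeSet) (hau : H₀.Adj a u) (hxy : H₀.Adj x y)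
    (hwa : w s(a, u) ≤ W) (hwx : w s(x, y) ≤ W) :
    gdist H w a x ≤ walkWeight G w q + 2 * W :=
  calc gdist H w a x ≤ gdist H w a u + (gdist H w u y + gdist H w y x) :=
        (gdist_triangle H w a u x).trans (by gcongr; exact gdist_triangle H w u y x)
    _ ≤ W + (walkWeight G w q + W) := by
        rw [gdist_comm H w y x]
        gcongr
        exacts [(gdist_le_of_adj (hH₀H hau)).trans hwa, gdist_le_walkWeight_of_edges_mem q hqH,
          (gdist_le_of_adj (hH₀H hxy)).trans hwx]
    _ = walkWeight G w q + 2 * W := by ring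

lemma gdist_le_gdist_add_four_mul (hH₀G : H₀ ≤ G) (q : G.Walk u y)
    (hq : walkWeight G w q ≤ gdist G w u y) (hau : H₀.Adj a u) (hxy : H₀.Adj x y)
    (hwa : w s(a, u) ≤ W) (hwx : w s(x, y) ≤ W) (hax : gdist H w a x ≤ walkWeight G w q + 2 * W) :
    gdist H w a x ≤ gdist G w a x + 4 * W :=
  calc gdist H w a x ≤ gdist G w u y + 2 * W := hax.trans (by gcongr)
    _ ≤ gdist G w u a + (gdist G w a x + gdist G w x y) + 2 * W := by
        gcongr
        exact (gdist_triangle G w u a y).trans (by gcongr; exact gdist_triangle G w a x y)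
    _ ≤ W + (gdist G w a x + W) + 2 * W := by
        rw [gdist_comm G w u a]
        gcongr
        exacts [(gdist_le_of_adj (hH₀G hau)).trans hwa, (gdist_le_of_adj (hH₀G hxy)).trans hwx]
    _ = gdist G w a x + 4 * W := by ring

lemma gdist_le_add_six_mul_add_improvements {H₁ : SimpleGraph V}
    (p₁ : G.Walk s u) (p₂ : G.Walk u y) (p₃ : G.Walk y v) (p₄ : G.Walk v t)
    (hsu : gdist H₀ w s u ≤ walkWeight G w p₁) (hvt : gdist H₀ w v t ≤ walkWeight G w p₄)
    (hau : H₀.Adj a u) (hbv : H₀.Adj b v) (hwa : w s(a, u) ≤ W) (hwb : w s(b, v) ≤ W)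
    (hax : gdist H₁ w a x ≤ walkWeight G w p₂ + 2 * W)
    (hxb : gdist H₁ w x b ≤ walkWeight G w p₃ + 2 * W) :
    gdist H₀ w s t ≤ walkWeight G w (p₁.append (p₂.append (p₃.append p₄))) + 6 * W +
      (gdist H₀ w a x - gdist H₁ w a x) + (gdist H₀ w x b - gdist H₁ w x b) :=
  calc gdist H₀ w s t ≤ gdist H₀ w s u + gdist H₀ w u a + gdist H₀ w a x + gdist H₀ w x b +
        gdist H₀ w b v + gdist H₀ w v t := by
        refine (gdist_triangle H₀ w s v t).trans (add_le_add_left ?_ _)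
        refine (gdist_triangle H₀ w s b v).trans (add_le_add_left ?_ _)
        refine (gdist_triangle H₀ w s x b).trans (add_le_add_left ?_ _)
        refine (gdist_triangle H₀ w s a x).trans (add_le_add_left ?_ _)
        exact gdist_triangle H₀ w s u a
    _ ≤ walkWeight G w p₁ + W +
        (gdist H₀ w a x - gdist H₁ w a x + (walkWeight G w p₂ + 2 * W)) +
        (gdist H₀ w x b - gdist H₁ w x b + (walkWeight G w p₃ + 2 * W)) + W +
        walkWeight G w p₄ := by
        rw [gdist_comm H₀ w u a]
        gcongr
        exacts [(gdist_le_of_adj hau).trans hwa, le_tsub_add.trans (by gcongr),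
          le_tsub_add.trans (by gcongr), (gdist_le_of_adj hbv).trans hwb]
    _ = _ := by simp only [walkWeight_append]; ring

end Spanner

theorem improvements_six_plus_eps_general
    (V : Type) (G : SimpleGraph V) (w : Sym2 V → ℝ≥0∞)
    (π : (s t : V) → G.Walk s t) (hπ : IsShortestPathScheme G w π)
    (s t : V) (ε : ℝ) (hε : 0 < ε)
    (H₀ H₁ : SimpleGraph V) (hH₀ : H₀ ≤ G)
    (hviol : gdist H₀ w s t >
      gdist G w s t + ENNReal.ofReal (6 + ε) * maxEdge G w (π s t))
    (hH₁ : H₁ = H₀ ⊔ SimpleGraph.fromEdgeSet {e | e ∈ (π s t).edges})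
    (u y v a x b : V)
    (p₁ : G.Walk s u) (p₂ : G.Walk u y) (p₃ : G.Walk y v) (p₄ : G.Walk v t)
    (horder : π s t = p₁.append (p₂.append (p₃.append p₄)))
    (hsu : gdist H₀ w s u = gdist G w s u)
    (hvt : gdist H₀ w v t = gdist G w v t)
    (ha : H₀.Adj a u ∧ w s(a, u) ≤ maxEdge G w (π s t))
    (hb : H₀.Adj b v ∧ w s(b, v) ≤ maxEdge G w (π s t))
    (hx : H₀.Adj x y ∧ w s(x, y) ≤ maxEdge G w (π s t)) :
    (gdist H₁ w a x ≤ gdist G w a x + 4 * maxEdge G w (π s t) ∧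
      gdist H₁ w x b ≤ gdist G w x b + 4 * maxEdge G w (π s t)) ∧
    (gdist H₀ w a x - gdist H₁ w a x > ENNReal.ofReal (ε / 2) * maxEdge G w (π s t) ∨
      gdist H₀ w x b - gdist H₁ w x b > ENNReal.ofReal (ε / 2) * maxEdge G w (π s t)) := by
  set W := maxEdge G w (π s t)
  have hfin : gdist G w s t ≠ ⊤ := ne_top_of_lt (lt_of_le_of_lt le_self_add hviol)
  have hπH₁ : ∀ e ∈ (π s t).edges, e ∈ H₁.edgeSet :=
    hH₁ ▸ (π s t).edges_mem_edgeSet_sup_fromEdgeSet H₀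
  have hπ_le : walkWeight G w (π s t) ≤ gdist G w s t := (hπ s t).le
  rw [horder] at hπH₁ hπ_le
  have hp₂ : walkWeight G w p₂ ≤ gdist G w u y :=
    walkWeight_le_gdist_of_append_append p₁ p₂ _ hπ_le hfin
  have hp₃ : walkWeight G w p₃ ≤ gdist G w y v := by
    refine walkWeight_le_gdist_of_append_append (p₁.append p₂) p₃ p₄ ?_ hfin
    rwa [← Walk.append_assoc]
  have hH₀₁ : H₀ ≤ H₁ := hH₁ ▸ le_sup_left
  have hax := gdist_le_walkWeight_add_two_mul hH₀₁ p₂ (fun e he => hπH₁ e (by simp [he]))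
    ha.1 hx.1 ha.2 hx.2
  have hxb := gdist_le_walkWeight_add_two_mul hH₀₁ p₃ (fun e he => hπH₁ e (by simp [he]))
    hx.1 hb.1 hx.2 hb.2
  refine ⟨⟨gdist_le_gdist_add_four_mul hH₀ p₂ hp₂ ha.1 hx.1 ha.2 hx.2 hax,
    gdist_le_gdist_add_four_mul hH₀ p₃ hp₃ hx.1 hb.1 hx.2 hb.2 hxb⟩, ?_⟩
  by_contra! ⟨hax_small, hxb_small⟩
  refine hviol.not_ge ?_
  calc gdist H₀ w s t ≤ gdist G w s t + 6 * W +
        (gdist H₀ w a x - gdist H₁ w a x) + (gdist H₀ w x b - gdist H₁ w x b) := by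
        rw [← hπ s t, horder]
        exact gdist_le_add_six_mul_add_improvements p₁ p₂ p₃ p₄ (hsu ▸ gdist_le_walkWeight p₁)
          (hvt ▸ gdist_le_walkWeight p₄) ha.1 hb.1 ha.2 hb.2 hax hxb
    _ ≤ gdist G w s t + 6 * W + ENNReal.ofReal (ε / 2) * W + ENNReal.ofReal (ε / 2) * W := by
        gcongr
    _ = gdist G w s t + ENNReal.ofReal (6 + ε) * W := by rw [ofReal_six_add_mul hε.le]; ring

/-- Set-off/improvement lemma for `+(6+ε)W(·,·)` spanner completion.
`H₀` is a subgraph still violating the `+(6+ε)W(s,t)` bound for `(s,t)`, `H₁` is `H₀`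
plus all edges of `π(s,t)`; `u, y, v` appear in this order along `π(s,t)`, with `s`–`u` and
`v`–`t` distances already exact in `H₀`; `a`, `x`, `b` are joined in `H₀` to `u`, `y`, `v`
respectively by edges of weight at most `W(s,t)`. Then the pairs `(a,x)` and `(x,b)` are set
off in `H₁`, and at least one of them improves by more than `ε·W(s,t)/2`. -/
theorem improvements_six_plus_eps
    (V : Type) [Fintype V] (G : SimpleGraph V) (w : Sym2 V → ℝ≥0∞)
    (hconn : G.Connected) (hw : PosWeights G w)
    (π : (s t : V) → G.Walk s t) (hπ : IsShortestPathScheme G w π)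
    (s t : V) (ε : ℝ) (hε : 0 < ε)
    (H₀ H₁ : SimpleGraph V) (hH₀ : H₀ ≤ G)
    (hviol : gdist H₀ w s t >
      gdist G w s t + ENNReal.ofReal (6 + ε) * maxEdge G w (π s t))
    (hH₁ : H₁ = H₀ ⊔ SimpleGraph.fromEdgeSet {e | e ∈ (π s t).edges})
    (u y v a x b : V)
    (p₁ : G.Walk s u) (p₂ : G.Walk u y) (p₃ : G.Walk y v) (p₄ : G.Walk v t)
    (horder : π s t = p₁.append (p₂.append (p₃.append p₄)))
    (hsu : gdist H₀ w s u = gdist G w s u)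
    (hvt : gdist H₀ w v t = gdist G w v t)
    (ha : H₀.Adj a u ∧ w s(a, u) ≤ maxEdge G w (π s t))
    (hb : H₀.Adj b v ∧ w s(b, v) ≤ maxEdge G w (π s t))
    (hx : H₀.Adj x y ∧ w s(x, y) ≤ maxEdge G w (π s t)) :
    (gdist H₁ w a x ≤ gdist G w a x + 4 * maxEdge G w (π s t) ∧
      gdist H₁ w x b ≤ gdist G w x b + 4 * maxEdge G w (π s t)) ∧
    (gdist H₀ w a x - gdist H₁ w a x > ENNReal.ofReal (ε / 2) * maxEdge G w (π s t) ∨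
      gdist H₀ w x b - gdist H₁ w x b > ENNReal.ofReal (ε / 2) * maxEdge G w (π s t)) :=
  improvements_six_plus_eps_general V G w π hπ s t ε hε H₀ H₁ hH₀ hviol hH₁ u y v a x b p₁ p₂ p₃ p₄
    horder hsu hvt ha hb hx
end

section
/- Let G be a connected weighted graph, s,t vertices, and ε > 0. Let H₀ be a subgraph of G with d_{H₀}(s,t) > d_G(s,t) + (4+ε)·W(s,t), and let H₁ be H₀ together with all edges of π(s,t). Let a and b be vertices with d_{H₀}(s,a) ≤ W(s,t) and d_{H₀}(t,b) ≤ W(s,t), and let x be a vertex with d_{H₀}(y,x) ≤ (ε/4)·W(s,t) for some vertex y on π(s,t). Then: (1) d_{H₁}(a,x) ≤ d_G(a,x) + (2+ε)·W(s,t) and d_{H₁}(b,x) ≤ d_G(b,x) + (2+ε)·W(s,t); and (2) d_{H₀}(a,x) − d_{H₁}(a,x) ≥ (ε/4)·W(s,t) or d_{H₀}(b,x) − d_{H₁}(b,x) ≥ (ε/4)·W(s,t). -/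
/-!
Cut `π(s,t)` at `y`. Both pieces are shortest paths, and `H₁` contains them, so
`d_{H₁}(s,y) ≤ d(s,y)`, `d_{H₁}(y,t) ≤ d(y,t)` and `d(s,y) + d(y,t) = d(s,t)`.
Routing `a → s → y → x` in `H₁` costs at most `W + d(s,y) + εW/4`, and by the triangle inequality
in `G`, `d(s,y) ≤ W + d(a,x) + εW/4`; this gives the `+(2+ε)W` bounds. If neither pair improved by
`εW/4`, the walk `s → a → x → b → t` in `H₀` would have length at most
`d(s,y) + d(y,t) + (4+ε)W = d(s,t) + (4+ε)W`, contradicting the choice of `H₀`.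
-/

open scoped ENNReal Classical

namespace SimpleGraph

variable {V : Type} {G H H₀ H₁ : SimpleGraph V} (w : Sym2 V → ℝ≥0∞)

lemma walkWeight_append {u v z : V} (p : G.Walk u v) (q : G.Walk v z) :
    walkWeight G w (p.append q) = walkWeight G w p + walkWeight G w q := by
  simp [walkWeight, Walk.edges_append]

lemma walkWeight_reverse {u v : V} (p : G.Walk u v) :
    walkWeight G w p.reverse = walkWeight G w p := by
  simp [walkWeight, Walk.edges_reverse, List.sum_reverse]

lemma walkWeight_transfer {u v : V} (p : G.Walk u v) (hp : ∀ e ∈ p.edges, e ∈ H.edgeSet) :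
    walkWeight H w (p.transfer H hp) = walkWeight G w p := by
  simp [walkWeight, Walk.edges_transfer]

lemma gdist_le_walkWeight {u v : V} (p : G.Walk u v) : gdist G w u v ≤ walkWeight G w p :=
  iInf_le _ p

lemma gdist_le_walkWeight_of_edges_subset {u v : V} (p : G.Walk u v)
    (hp : ∀ e ∈ p.edges, e ∈ H.edgeSet) : gdist H w u v ≤ walkWeight G w p :=
  (gdist_le_walkWeight w (p.transfer H hp)).trans_eq (walkWeight_transfer w p hp)

lemma gdist_antitone (hHG : H ≤ G) (u v : V) : gdist G w u v ≤ gdist H w u v :=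
  le_iInf fun p => gdist_le_walkWeight_of_edges_subset w p
    fun _ he => edgeSet_mono hHG (p.edges_subset_edgeSet he)

lemma gdist_triangle (u v z : V) : gdist G w u z ≤ gdist G w u v + gdist G w v z := by
  unfold gdist
  rw [ENNReal.iInf_add]
  refine le_iInf fun p => ?_
  rw [ENNReal.add_iInf]
  refine le_iInf fun q => ?_
  exact (gdist_le_walkWeight w (p.append q)).trans_eq (walkWeight_append w p q)

lemma gdist_comm (u v : V) : gdist G w u v = gdist G w v u := by
  have key : ∀ a b : V, gdist G w a b ≤ gdist G w b a := fun a b =>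
    le_iInf fun p => (gdist_le_walkWeight w p.reverse).trans_eq (walkWeight_reverse w p)
  exact le_antisymm (key u v) (key v u)

lemma gdist_add_gdist_eq_of_mem_support {u v y : V} (p : G.Walk u v)
    (hp : walkWeight G w p = gdist G w u v) (hy : y ∈ p.support) :
    gdist G w u y + gdist G w y v = gdist G w u v := by
  refine le_antisymm ?_ (gdist_triangle w u y v)
  calc gdist G w u y + gdist G w y v
      ≤ walkWeight G w (p.takeUntil y hy) + walkWeight G w (p.dropUntil y hy) :=
        add_le_add (gdist_le_walkWeight w _) (gdist_le_walkWeight w _)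
    _ = gdist G w u v := by rw [← walkWeight_append, p.take_spec hy, hp]

lemma gdist_le_gdist_of_mem_support {u v y : V} (p : G.Walk u v)
    (hp : walkWeight G w p = gdist G w u v) (hfin : gdist G w u v ≠ ⊤)
    (hH : ∀ e ∈ p.edges, e ∈ H.edgeSet) (hy : y ∈ p.support) :
    gdist H w u y ≤ gdist G w u y ∧ gdist H w y v ≤ gdist G w y v := by
  set q := p.takeUntil y hy
  set r := p.dropUntil y hy
  have hqr : walkWeight G w q + walkWeight G w r = gdist G w u y + gdist G w y v := by
    rw [← walkWeight_append, p.take_spec hy, hp, gdist_add_gdist_eq_of_mem_support w p hp hy]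
  have hfin' : walkWeight G w q + walkWeight G w r ≠ ⊤ := by
    rwa [← walkWeight_append, p.take_spec hy, hp]
  obtain ⟨hq, hr⟩ := ENNReal.add_ne_top.1 hfin'
  have hHq : gdist H w u y ≤ walkWeight G w q :=
    gdist_le_walkWeight_of_edges_subset w q fun e he =>
      hH e (p.edges_takeUntil_subset_edges hy he)
  have hHr : gdist H w y v ≤ walkWeight G w r :=
    gdist_le_walkWeight_of_edges_subset w r fun e he =>
      hH e (p.edges_dropUntil_subset_edges hy he)
  refine ⟨hHq.trans ?_, hHr.trans ?_⟩
  · refine ENNReal.le_of_add_le_add_right hr ?_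
    calc walkWeight G w q + walkWeight G w r = gdist G w u y + gdist G w y v := hqr
      _ ≤ gdist G w u y + walkWeight G w r := by gcongr; exact gdist_le_walkWeight w r
  · refine ENNReal.le_of_add_le_add_left hq ?_
    calc walkWeight G w q + walkWeight G w r = gdist G w u y + gdist G w y v := hqr
      _ ≤ walkWeight G w q + gdist G w y v := by gcongr; exact gdist_le_walkWeight w q

lemma mem_edgeSet_sup_fromEdgeSet_edges {u v : V} (p : G.Walk u v) :
    ∀ e ∈ p.edges, e ∈ (H ⊔ fromEdgeSet {e | e ∈ p.edges}).edgeSet := fun e he => by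
  rw [edgeSet_sup, edgeSet_fromEdgeSet]
  exact Or.inr ⟨he, G.not_isDiag_of_mem_edgeSet (p.edges_subset_edgeSet he)⟩

lemma sup_fromEdgeSet_edges_le (hHG : H ≤ G) {u v : V} (p : G.Walk u v) :
    H ⊔ fromEdgeSet {e | e ∈ p.edges} ≤ G :=
  sup_le hHG <| (fromEdgeSet_mono fun _ he => p.edges_subset_edgeSet he).trans
    (fromEdgeSet_edgeSet G).le

lemma gdist_le_add_of_near (hH : H₀ ≤ H₁) {s y a x : V} {r δ : ℝ≥0∞}
    (ha : gdist H₀ w s a ≤ r) (hx : gdist H₀ w y x ≤ δ) :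
    gdist H₁ w a x ≤ r + gdist H₁ w s y + δ := by
  calc gdist H₁ w a x ≤ gdist H₁ w a s + gdist H₁ w s y + gdist H₁ w y x :=
        (gdist_triangle w a y x).trans (add_le_add_left (gdist_triangle w a s y) _)
    _ ≤ r + gdist H₁ w s y + δ := by
        rw [gdist_comm w a s]
        gcongr
        exacts [(gdist_antitone w hH s a).trans ha, (gdist_antitone w hH y x).trans hx]

lemma gdist_le_add_two_mul_of_near (hH₀₁ : H₀ ≤ H₁) (hH₁G : H₁ ≤ G) {s y a x : V}
    {r δ : ℝ≥0∞} (hsy : gdist H₁ w s y ≤ gdist G w s y)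
    (ha : gdist H₀ w s a ≤ r) (hx : gdist H₀ w y x ≤ δ) :
    gdist H₁ w a x ≤ gdist G w a x + 2 * (r + δ) := by
  have hH₀G := hH₀₁.trans hH₁G
  have hGsy : gdist G w s y ≤ r + gdist G w a x + δ := by
    calc gdist G w s y ≤ gdist G w s a + gdist G w a x + gdist G w x y :=
          (gdist_triangle w s x y).trans (add_le_add_left (gdist_triangle w s a x) _)
      _ ≤ r + gdist G w a x + δ := by
          rw [gdist_comm w x y]
          gcongr
          exacts [(gdist_antitone w hH₀G s a).trans ha, (gdist_antitone w hH₀G y x).trans hx]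
  calc gdist H₁ w a x ≤ r + gdist H₁ w s y + δ := gdist_le_add_of_near w hH₀₁ ha hx
    _ ≤ r + (r + gdist G w a x + δ) + δ := by gcongr; exact hsy.trans hGsy
    _ = gdist G w a x + 2 * (r + δ) := by ring

/-- The walk `s → a → x → b → t` in `H₀`, when neither `(a, x)` nor `(b, x)` gains more than `δ`
from `H₀` to `H₁`. -/
lemma gdist_le_add_four_mul_of_improvements_le (hH : H₀ ≤ H₁) {s t y a b x : V}
    {A B r δ : ℝ≥0∞} (hsy : gdist H₁ w s y ≤ A) (hty : gdist H₁ w t y ≤ B)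
    (ha : gdist H₀ w s a ≤ r) (hb : gdist H₀ w t b ≤ r) (hx : gdist H₀ w y x ≤ δ)
    (hax : gdist H₀ w a x - gdist H₁ w a x ≤ δ) (hbx : gdist H₀ w b x - gdist H₁ w b x ≤ δ) :
    gdist H₀ w s t ≤ A + B + 4 * (r + δ) := by
  have hax' : gdist H₀ w a x ≤ r + A + δ + δ :=
    (tsub_le_iff_left.1 hax).trans <| by grw [gdist_le_add_of_near w hH ha hx, hsy]
  have hbx' : gdist H₀ w b x ≤ r + B + δ + δ :=
    (tsub_le_iff_left.1 hbx).trans <| by grw [gdist_le_add_of_near w hH hb hx, hty]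
  calc gdist H₀ w s t ≤ gdist H₀ w s a + gdist H₀ w a x + gdist H₀ w x b + gdist H₀ w b t :=
        (gdist_triangle w s b t).trans <| add_le_add_left
          ((gdist_triangle w s x b).trans (add_le_add_left (gdist_triangle w s a x) _)) _
    _ = gdist H₀ w s a + gdist H₀ w a x + gdist H₀ w b x + gdist H₀ w t b := by
        rw [gdist_comm w x b, gdist_comm w b t]
    _ ≤ r + (r + A + δ + δ) + (r + B + δ + δ) + r := by gcongr
    _ = A + B + 4 * (r + δ) := by ring

end SimpleGraph

namespace ENNReal

lemma two_mul_add_ofReal_quarter_mul_le {ε : ℝ} (hε : 0 ≤ ε) (W : ℝ≥0∞) :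
    2 * (W + ENNReal.ofReal (ε / 4) * W) ≤ ENNReal.ofReal (2 + ε) * W := by
  rw [← one_add_mul, ← mul_assoc]
  gcongr
  rw [← ENNReal.ofReal_one, ← ENNReal.ofReal_add zero_le_one (by positivity),
    ← ENNReal.ofReal_ofNat 2, ← ENNReal.ofReal_mul zero_le_two]
  exact ENNReal.ofReal_le_ofReal (by linarith)

lemma four_mul_add_ofReal_quarter_mul {ε : ℝ} (hε : 0 ≤ ε) (W : ℝ≥0∞) :
    4 * (W + ENNReal.ofReal (ε / 4) * W) = ENNReal.ofReal (4 + ε) * W := by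
  rw [← one_add_mul, ← mul_assoc]
  congr 1
  rw [← ENNReal.ofReal_one, ← ENNReal.ofReal_add zero_le_one (by positivity),
    ← ENNReal.ofReal_ofNat 4, ← ENNReal.ofReal_mul zero_le_four]
  ring_nf

end ENNReal

open SimpleGraph

theorem improvements_four_plus_eps_W_general
    (V : Type) (G : SimpleGraph V) (w : Sym2 V → ℝ≥0∞)
    (π : (s t : V) → G.Walk s t) (hπ : IsShortestPathScheme G w π)
    (s t : V) (ε : ℝ) (hε : 0 < ε)
    (H₀ H₁ : SimpleGraph V) (hH₀ : H₀ ≤ G)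
    (hviol : gdist H₀ w s t >
      gdist G w s t + ENNReal.ofReal (4 + ε) * maxEdge G w (π s t))
    (hH₁ : H₁ = H₀ ⊔ SimpleGraph.fromEdgeSet {e | e ∈ (π s t).edges})
    (a b : V)
    (ha : gdist H₀ w s a ≤ maxEdge G w (π s t))
    (hb : gdist H₀ w t b ≤ maxEdge G w (π s t))
    (x y : V) (hy : y ∈ (π s t).support)
    (hx : gdist H₀ w y x ≤ ENNReal.ofReal (ε / 4) * maxEdge G w (π s t)) :
    (gdist H₁ w a x ≤ gdist G w a x + ENNReal.ofReal (2 + ε) * maxEdge G w (π s t) ∧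
      gdist H₁ w b x ≤ gdist G w b x + ENNReal.ofReal (2 + ε) * maxEdge G w (π s t)) ∧
    (gdist H₀ w a x - gdist H₁ w a x ≥ ENNReal.ofReal (ε / 4) * maxEdge G w (π s t) ∨
      gdist H₀ w b x - gdist H₁ w b x ≥ ENNReal.ofReal (ε / 4) * maxEdge G w (π s t)) := by
  set W := maxEdge G w (π s t)
  have hH₀₁ : H₀ ≤ H₁ := hH₁ ▸ le_sup_left
  have hH₁G : H₁ ≤ G := hH₁ ▸ sup_fromEdgeSet_edges_le hH₀ (π s t)
  have hfin : gdist G w s t ≠ ⊤ := (ENNReal.add_ne_top.1 (ne_top_of_lt hviol)).1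
  obtain ⟨hsy, hyt⟩ := gdist_le_gdist_of_mem_support w (π s t) (hπ s t) hfin
    (hH₁ ▸ mem_edgeSet_sup_fromEdgeSet_edges (π s t)) hy
  have hty : gdist H₁ w t y ≤ gdist G w t y := by rwa [gdist_comm w t, gdist_comm w t]
  refine ⟨⟨?_, ?_⟩, ?_⟩
  · exact (gdist_le_add_two_mul_of_near w hH₀₁ hH₁G hsy ha hx).trans
      (add_le_add_right (ENNReal.two_mul_add_ofReal_quarter_mul_le hε.le W) _)
  · exact (gdist_le_add_two_mul_of_near w hH₀₁ hH₁G hty hb hx).trans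
      (add_le_add_right (ENNReal.two_mul_add_ofReal_quarter_mul_le hε.le W) _)
  · by_contra! hsmall
    refine hviol.not_ge ?_
    calc gdist H₀ w s t
        ≤ gdist G w s y + gdist G w t y + 4 * (W + ENNReal.ofReal (ε / 4) * W) :=
          gdist_le_add_four_mul_of_improvements_le w hH₀₁ hsy hty ha hb hx
            hsmall.1.le hsmall.2.le
      _ = gdist G w s t + ENNReal.ofReal (4 + ε) * W := by
          rw [gdist_comm w t y, gdist_add_gdist_eq_of_mem_support w (π s t) (hπ s t) hy,
            ENNReal.four_mul_add_ofReal_quarter_mul hε.le]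

/-- Set-off/improvement lemma for `+(4+ε)W(·,·)` spanner completion.
`H₀` is a subgraph still violating the `+(4+ε)·W(s,t)` bound for `(s,t)`, `H₁` is `H₀` plus
all edges of `π(s,t)`; `a` and `b` are vertices with `d_{H₀}(s,a) ≤ W(s,t)` and
`d_{H₀}(t,b) ≤ W(s,t)`, and `x` is a vertex with `d_{H₀}(y,x) ≤ (ε/4)·W(s,t)` for some
vertex `y` on `π(s,t)`. Then the pairs `(a,x)` and `(b,x)` are set off in `H₁`, and at least
one of them improves by at least `(ε/4)·W(s,t)`. -/
theorem improvements_four_plus_eps_W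
    (V : Type) [Fintype V] (G : SimpleGraph V) (w : Sym2 V → ℝ≥0∞)
    (hconn : G.Connected) (hw : PosWeights G w)
    (π : (s t : V) → G.Walk s t) (hπ : IsShortestPathScheme G w π)
    (s t : V) (ε : ℝ) (hε : 0 < ε)
    (H₀ H₁ : SimpleGraph V) (hH₀ : H₀ ≤ G)
    (hviol : gdist H₀ w s t >
      gdist G w s t + ENNReal.ofReal (4 + ε) * maxEdge G w (π s t))
    (hH₁ : H₁ = H₀ ⊔ SimpleGraph.fromEdgeSet {e | e ∈ (π s t).edges})
    (a b : V)
    (ha : gdist H₀ w s a ≤ maxEdge G w (π s t))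
    (hb : gdist H₀ w t b ≤ maxEdge G w (π s t))
    (x y : V) (hy : y ∈ (π s t).support)
    (hx : gdist H₀ w y x ≤ ENNReal.ofReal (ε / 4) * maxEdge G w (π s t)) :
    (gdist H₁ w a x ≤ gdist G w a x + ENNReal.ofReal (2 + ε) * maxEdge G w (π s t) ∧
      gdist H₁ w b x ≤ gdist G w b x + ENNReal.ofReal (2 + ε) * maxEdge G w (π s t)) ∧
    (gdist H₀ w a x - gdist H₁ w a x ≥ ENNReal.ofReal (ε / 4) * maxEdge G w (π s t) ∨
      gdist H₀ w b x - gdist H₁ w b x ≥ ENNReal.ofReal (ε / 4) * maxEdge G w (π s t)) :=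
  improvements_four_plus_eps_W_general V G w π hπ s t ε hε H₀ H₁ hH₀ hviol hH₁ a b ha hb x y hy hx
end
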